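/- Let X be a measurable space and Y a type of labels. Let S (source) and T (target) be probability measures on X, let H be a nonempty set of hypotheses h : X → Y with all disagreement sets {x | h x ≠ h' x} for h, h' ∈ H measurable, and let f_S, f_T : X → Y be the source and target labeling functions. For a measure μ and f, g : X → Y write R_μ(f,g) := μ {x | f x ≠ g x}, and write R_S(h) := R_S(h, f_S), R_T(h) := R_T(h, f_T). Define the HΔH-divergence d_{HΔH}(S,T) := 2 · sup_{h, h' ∈ H} |R_S(h, h') − R_T(h, h')| and the ideal joint error C := ⨅_{h' ∈ H} (R_S(h') + R_T(h')). Then for every h ∈ H, R_T(h) ≤ R_S(h) + (1/2) · d_{HΔH}(S,T) + C. -/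

import Mathlib

open MeasureTheory

/-- Expected 0-1 risk of `f` against `g` under measure `μ`:
the `μ`-measure of the disagreement set. -/
noncomputable def risk01 {X Y : Type*} [MeasurableSpace X]
    (μ : Measure X) (f g : X → Y) : ENNReal :=
  μ {x | f x ≠ g x}

/-- The `HΔH`-divergence between `S` and `T` with respect to the hypothesis set `H`:
`2 · sup_{h,h' ∈ H} |R_S(h,h') − R_T(h,h')|`, with the absolute difference of
extended nonneg reals expressed as `(a - b) ⊔ (b - a)` (truncated subtraction). -/
noncomputable def dHDeltaH {X Y : Type*} [MeasurableSpace X]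
    (S T : Measure X) (H : Set (X → Y)) : ENNReal :=
  2 * ⨆ h ∈ H, ⨆ h' ∈ H,
    (risk01 S h h' - risk01 T h h') ⊔ (risk01 T h h' - risk01 S h h')

/-! The target error of `h` is at most its target disagreement with any `h' ∈ H` plus the
target error of `h'`. Moving that disagreement from `T` to `S` costs at most half the
`HΔH`-divergence, and on `S` it is bounded by the source errors of `h` and `h'`. Taking the
infimum over `h'` gives the ideal joint error. -/

section Risk

variable {X Y : Type*} [MeasurableSpace X]

theorem risk01_comm (μ : Measure X) (f g : X → Y) : risk01 μ f g = risk01 μ g f := by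
  simp only [risk01, ne_comm]

theorem risk01_le_add (μ : Measure X) (f k g : X → Y) :
    risk01 μ f g ≤ risk01 μ f k + risk01 μ k g := by
  refine (measure_mono fun x hx => ?_).trans (measure_union_le _ _)
  by_cases hfk : f x = k x
  · exact Or.inr fun hkg => hx (hfk.trans hkg)
  · exact Or.inl hfk

theorem half_mul_dHDeltaH (S T : Measure X) (H : Set (X → Y)) :
    (1 / 2) * dHDeltaH S T H = ⨆ h ∈ H, ⨆ h' ∈ H,
      (risk01 S h h' - risk01 T h h') ⊔ (risk01 T h h' - risk01 S h h') := by
  rw [dHDeltaH, ← mul_assoc, one_div, ENNReal.inv_mul_cancel two_ne_zero ENNReal.ofNat_ne_top,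
    one_mul]

theorem risk01_le_add_half_mul_dHDeltaH (S T : Measure X) {H : Set (X → Y)} {h h' : X → Y}
    (hh : h ∈ H) (hh' : h' ∈ H) :
    risk01 T h h' ≤ risk01 S h h' + (1 / 2) * dHDeltaH S T H := by
  rw [half_mul_dHDeltaH, ← tsub_le_iff_left]
  exact le_sup_right.trans <| le_iSup₂_of_le h hh <| le_iSup₂_of_le h' hh' le_rfl

theorem target_risk_le_of_mem (S T : Measure X) {H : Set (X → Y)} (fS fT : X → Y)
    {h h' : X → Y} (hh : h ∈ H) (hh' : h' ∈ H) :
    risk01 T h fT ≤ risk01 S h fS + (1 / 2) * dHDeltaH S T H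
      + (risk01 S h' fS + risk01 T h' fT) :=
  calc risk01 T h fT ≤ risk01 T h h' + risk01 T h' fT := risk01_le_add T h h' fT
    _ ≤ risk01 S h h' + (1 / 2) * dHDeltaH S T H + risk01 T h' fT := by
      gcongr; exact risk01_le_add_half_mul_dHDeltaH S T hh hh'
    _ ≤ risk01 S h fS + risk01 S fS h' + (1 / 2) * dHDeltaH S T H + risk01 T h' fT := by
      gcongr; exact risk01_le_add S h fS h'
    _ = risk01 S h fS + (1 / 2) * dHDeltaH S T H + (risk01 S h' fS + risk01 T h' fT) := by
      rw [risk01_comm S fS h']; ring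

end Risk

theorem target_risk_bound_general {X Y : Type*} [MeasurableSpace X]
    (S T : Measure X)
    (H : Set (X → Y))
    (fS fT : X → Y)
    (h : X → Y) (hh : h ∈ H) :
    risk01 T h fT ≤ risk01 S h fS + (1 / 2) * dHDeltaH S T H
        + ⨅ h' ∈ H, risk01 S h' fS + risk01 T h' fT := by
  rw [ENNReal.add_iInf₂]
  exact le_iInf₂ fun _ hh' => target_risk_le_of_mem S T fS fT hh hh'

/-- The Ben-David et al. bound (Inequality 13 of the paper): for every `h ∈ H`,
`R_T(h) ≤ R_S(h) + (1/2) d_{HΔH}(S,T) + C`, where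
`C = ⨅ h' ∈ H, R_S(h') + R_T(h')` is the ideal joint error. -/
theorem target_risk_bound {X Y : Type*} [MeasurableSpace X]
    (S T : Measure X) [IsProbabilityMeasure S] [IsProbabilityMeasure T]
    (H : Set (X → Y)) (hH : H.Nonempty)
    (hmeas : ∀ h ∈ H, ∀ h' ∈ H, MeasurableSet {x | h x ≠ h' x})
    (fS fT : X → Y)
    (h : X → Y) (hh : h ∈ H) :
    risk01 T h fT ≤ risk01 S h fS + (1 / 2) * dHDeltaH S T H
        + ⨅ h' ∈ H, risk01 S h' fS + risk01 T h' fT :=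
  target_risk_bound_general S T H fS fT h hh
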